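/- arXiv:1808.09320 — 3 statements merged into one kernel-verified Lean document; each statement's English description precedes it below -/
import Mathlib

section
/- Let T be a smooth, symmetric, stationary (∂₀T^{αβ}=0) energy-momentum tensor on Minkowski space whose components, and the components of all its boosted versions, are integrable over Σ. Then the equality P^α[Σ, Λ·T] = Λ^α_β P^β[Σ, T] holds for every pure boost Λ (in every spatial direction x^k, k=1,2,3, and every velocity parameter β ∈ (−1,1)) if and only if the nine spatial integrals ∫_Σ T^{μm} d³x vanish for all μ ∈ {0,1,2,3} and all m ∈ {1,2,3}. -/
/-! Stationarity makes `T(x)` depend only on the spatial part of `x`. For `x ∈ Σ`, the spatial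
part of `Λ⁻¹x` is `x` with its `k`-th coordinate stretched by `γ`, so the substitution in
`∫_Σ (Λ·T)^{α0}` produces the Jacobian `1/γ`, and since `Λ⁰_δ T^{γδ} = γ (T^{γ0} + β T^{γk})`,
`P^α[Σ, Λ·T] = Λ^α_γ (P^γ[Σ,T] + β ∫_Σ T^{γk})`. As `Λ` is invertible, covariance under a single
boost with `β ≠ 0` in direction `k` forces `∫_Σ T^{γk} = 0` for all `γ`. -/

open MeasureTheory

noncomputable section

/-- Embedding of the spacelike hyperplane `Σ = {x⁰ = 0}` into Minkowski space `ℝ⁴`. -/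
def emb (y : Fin 3 → ℝ) : Fin 4 → ℝ := Fin.cons 0 y

/-- Total four-momentum `P^α[Σ,T] := ∫_Σ T^{α0} d³x`. -/
def Pmom (T : (Fin 4 → ℝ) → Fin 4 → Fin 4 → ℝ) (α : Fin 4) : ℝ :=
  ∫ y : Fin 3 → ℝ, T (emb y) α 0

/-- Active Lorentz transformation of a (2,0)-tensor field:
`(Λ·T)^{αβ}(x) = Λ^α_γ Λ^β_δ T^{γδ}(Λ⁻¹x)`. -/
def actT (Λ : Matrix (Fin 4) (Fin 4) ℝ) (T : (Fin 4 → ℝ) → Fin 4 → Fin 4 → ℝ) :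
    (Fin 4 → ℝ) → Fin 4 → Fin 4 → ℝ :=
  fun x α β => ∑ γ : Fin 4, ∑ δ : Fin 4, Λ α γ * Λ β δ * T (Λ⁻¹.mulVec x) γ δ

/-- Lorentz factor `γ = 1/√(1−β²)`. -/
def gam (b : ℝ) : ℝ := 1 / Real.sqrt (1 - b ^ 2)

/-- Pure boost in the `x^k`-direction (`k` a spatial index) with velocity parameter `b`. -/
def boost (k : Fin 3) (b : ℝ) : Matrix (Fin 4) (Fin 4) ℝ :=
  Matrix.of fun i j =>
    if i = 0 ∧ j = 0 then gam b
    else if i = 0 ∧ j = k.succ then b * gam b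
    else if i = k.succ ∧ j = 0 then b * gam b
    else if i = k.succ ∧ j = k.succ then gam b
    else if i = j then 1 else 0

open scoped Matrix

section
variable {E F : Type*} [NormedAddCommGroup E] [NormedSpace ℝ E] [MeasurableSpace E] [BorelSpace E]
  [FiniteDimensional ℝ E] (μ : Measure E) [μ.IsAddHaarMeasure]
  [NormedAddCommGroup F] [NormedSpace ℝ F]

theorem integral_comp_linearMap {L : E →ₗ[ℝ] E} (hL : LinearMap.det L ≠ 0) (f : E → F) :
    ∫ x, f (L x) ∂μ = |(LinearMap.det L)⁻¹| • ∫ x, f x ∂μ := by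
  have hinj : LinearMap.ker L = ⊥ :=
    (LinearMap.isUnit_iff_ker_eq_bot L).1 ((LinearMap.isUnit_iff_isUnit_det L).2 hL.isUnit)
  rw [← (LinearMap.isClosedEmbedding_of_injective hinj).integral_map,
    Measure.map_linearMap_addHaar_eq_smul_addHaar μ hL, integral_smul_measure,
    ENNReal.toReal_ofReal (abs_nonneg _)]
end

theorem integral_comp_update_mul {ι F : Type*} [Fintype ι] [DecidableEq ι]
    [NormedAddCommGroup F] [NormedSpace ℝ F]
    (f : (ι → ℝ) → F) (k : ι) {c : ℝ} (hc : c ≠ 0) :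
    ∫ y, f (Function.update y k (c * y k)) = |c|⁻¹ • ∫ y, f y := by
  set L := Matrix.toLin' (Matrix.diagonal (Function.update 1 k c))
  have hL : ∀ y, L y = Function.update y k (c * y k) := by
    intro y; ext i
    rcases eq_or_ne i k with rfl | hi <;> simp [L, Matrix.mulVec_diagonal, *]
  have hdet : LinearMap.det L = c := by
    simp [L, LinearMap.det_toLin', Finset.prod_update_of_mem]
  simp_rw [← hL]
  rw [integral_comp_linearMap volume (hdet ▸ hc), hdet, abs_inv]

theorem apply_add_smul_eq_of_fderiv_apply_eq_zero {E F : Type*} [NormedAddCommGroup E]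
    [NormedSpace ℝ E] [NormedAddCommGroup F] [NormedSpace ℝ F] {f : E → F}
    (hf : Differentiable ℝ f) {v : E} (hv : ∀ x, fderiv ℝ f x v = 0) (x : E) (t : ℝ) :
    f (x + t • v) = f x := by
  have hderiv : ∀ s : ℝ, HasDerivAt (fun s : ℝ => f (x + s • v)) 0 s := by
    intro s
    have hline : HasDerivAt (fun s : ℝ => x + s • v) v s := by
      simpa using ((hasDerivAt_id s).smul_const v).const_add x
    have h := (hf (x + s • v)).hasFDerivAt.comp_hasDerivAt s hline
    rwa [hv] at h
  simpa using is_const_of_deriv_eq_zero (fun s => (hderiv s).differentiableAt)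
    (fun s => (hderiv s).deriv) t 0

theorem cons_eq_cons_zero_add_smul_single {n : ℕ} (t : ℝ) (y : Fin n → ℝ) :
    (Fin.cons t y : Fin (n + 1) → ℝ) = Fin.cons 0 y + t • Pi.single 0 1 := by
  ext i
  refine Fin.cases ?_ (fun j => ?_) i <;> simp

theorem apply_eq_apply_emb_tail {T : (Fin 4 → ℝ) → Fin 4 → Fin 4 → ℝ}
    (hT : Differentiable ℝ T)
    (hstat : ∀ x α β, fderiv ℝ (fun z => T z α β) x (Pi.single 0 1) = 0)
    (x : Fin 4 → ℝ) (α β : Fin 4) : T x α β = T (emb (Fin.tail x)) α β := by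
  have hTαβ : Differentiable ℝ fun z => T z α β := by fun_prop
  conv_lhs => rw [← Fin.cons_self_tail x, cons_eq_cons_zero_add_smul_single]
  exact apply_add_smul_eq_of_fderiv_apply_eq_zero hTαβ (hstat · α β) _ _

theorem gam_neg (b : ℝ) : gam (-b) = gam b := by simp [gam]

theorem gam_pos {b : ℝ} (hb : b ∈ Set.Ioo (-1 : ℝ) 1) : 0 < gam b := by
  have : 0 < 1 - b ^ 2 := by nlinarith [hb.1, hb.2]
  unfold gam
  positivity

theorem gam_sq_mul {b : ℝ} (hb : b ∈ Set.Ioo (-1 : ℝ) 1) : gam b ^ 2 * (1 - b ^ 2) = 1 := by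
  have : 0 < 1 - b ^ 2 := by nlinarith [hb.1, hb.2]
  rw [gam, div_pow, Real.sq_sqrt this.le]
  field_simp

theorem boost_mul_boost_neg {k : Fin 3} {b : ℝ} (hb : b ∈ Set.Ioo (-1 : ℝ) 1) :
    boost k b * boost k (-b) = 1 := by
  have hg := gam_sq_mul hb
  ext i j
  fin_cases k <;> fin_cases i <;> fin_cases j <;>
    simp +decide [boost, Matrix.mul_apply, Fin.sum_univ_four, gam_neg]
      <;> nlinarith [hg]

theorem boost_neg_mul_boost {k : Fin 3} {b : ℝ} (hb : b ∈ Set.Ioo (-1 : ℝ) 1) :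
    boost k (-b) * boost k b = 1 := by
  simpa using boost_mul_boost_neg (k := k) (b := -b) ⟨by linarith [hb.2], by linarith [hb.1]⟩

theorem inv_boost {k : Fin 3} {b : ℝ} (hb : b ∈ Set.Ioo (-1 : ℝ) 1) :
    (boost k b)⁻¹ = boost k (-b) :=
  Matrix.inv_eq_right_inv (boost_mul_boost_neg hb)

theorem boost_mulVec_injective {k : Fin 3} {b : ℝ} (hb : b ∈ Set.Ioo (-1 : ℝ) 1) :
    Function.Injective (boost k b).mulVec :=
  Function.LeftInverse.injective (g := (boost k (-b)).mulVec) fun v => by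
    rw [Matrix.mulVec_mulVec, boost_neg_mul_boost hb, Matrix.one_mulVec]

theorem emb_eq_vecCons (y : Fin 3 → ℝ) : emb y = ![0, y 0, y 1, y 2] := by
  ext i; fin_cases i <;> rfl

theorem tail_boost_mulVec_emb (k : Fin 3) (b : ℝ) (y : Fin 3 → ℝ) :
    Fin.tail (boost k b *ᵥ emb y) = Function.update y k (gam b * y k) := by
  ext i
  fin_cases k <;> fin_cases i <;>
    simp +decide [boost, Matrix.mulVec, dotProduct, Fin.tail,
      Fin.sum_univ_four, emb_eq_vecCons, Function.update]

theorem sum_boost_zero_mul (k : Fin 3) (b : ℝ) (v : Fin 4 → ℝ) :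
    ∑ δ, boost k b 0 δ * v δ = gam b * (v 0 + b * v k.succ) := by
  fin_cases k <;>
    simp +decide [Fin.sum_univ_four, boost] <;> ring

theorem integral_actT_boost_emb {T : (Fin 4 → ℝ) → Fin 4 → Fin 4 → ℝ}
    (hT : Differentiable ℝ T)
    (hstat : ∀ x α β, fderiv ℝ (fun z => T z α β) x (Pi.single 0 1) = 0)
    (hInt : ∀ α β, Integrable fun y : Fin 3 → ℝ => T (emb y) α β)
    {k : Fin 3} {b : ℝ} (hb : b ∈ Set.Ioo (-1 : ℝ) 1) (α β : Fin 4) :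
    ∫ y, actT (boost k b) T (emb y) α β =
      (gam b)⁻¹ * ∑ γ, ∑ δ, boost k b α γ * boost k b β δ * ∫ y, T (emb y) γ δ := by
  set G : (Fin 3 → ℝ) → ℝ := fun z => ∑ γ, ∑ δ, boost k b α γ * boost k b β δ * T (emb z) γ δ
  have hpull : ∀ y, actT (boost k b) T (emb y) α β = G (Function.update y k (gam b * y k)) := by
    intro y
    simp only [actT, G, inv_boost hb, apply_eq_apply_emb_tail hT hstat
      (boost k (-b) *ᵥ emb y), tail_boost_mulVec_emb, gam_neg]
  rw [integral_congr_ae (.of_forall hpull), integral_comp_update_mul G k (gam_pos hb).ne',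
    abs_of_pos (gam_pos hb), smul_eq_mul, integral_finsetSum _ fun γ _ =>
      integrable_finsetSum _ fun δ _ => (hInt γ δ).const_mul _]
  congr 1
  refine Finset.sum_congr rfl fun γ _ => ?_
  rw [integral_finsetSum _ fun δ _ => (hInt γ δ).const_mul _]
  simp only [integral_const_mul]

theorem Pmom_actT_boost {T : (Fin 4 → ℝ) → Fin 4 → Fin 4 → ℝ}
    (hT : Differentiable ℝ T)
    (hstat : ∀ x α β, fderiv ℝ (fun z => T z α β) x (Pi.single 0 1) = 0)
    (hInt : ∀ α β, Integrable fun y : Fin 3 → ℝ => T (emb y) α β)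
    {k : Fin 3} {b : ℝ} (hb : b ∈ Set.Ioo (-1 : ℝ) 1) :
    Pmom (actT (boost k b) T) = boost k b *ᵥ (Pmom T + b • fun γ => ∫ y, T (emb y) γ k.succ) := by
  ext α
  rw [Pmom, integral_actT_boost_emb hT hstat hInt hb, Matrix.mulVec, dotProduct, Finset.mul_sum]
  refine Finset.sum_congr rfl fun γ _ => ?_
  simp only [mul_assoc, ← Finset.mul_sum, sum_boost_zero_mul, Pi.add_apply, Pi.smul_apply,
    smul_eq_mul, Pmom]
  field_simp [(gam_pos hb).ne']

theorem laue_boost_covariance_iff_general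
    (T : (Fin 4 → ℝ) → Fin 4 → Fin 4 → ℝ)
    (hsmooth : ContDiff ℝ (⊤ : ℕ∞) T)
    (hstat : ∀ x α β, fderiv ℝ (fun z => T z α β) x (Pi.single 0 1) = 0)
    (hInt : ∀ α β, Integrable fun y : Fin 3 → ℝ => T (emb y) α β) :
    (∀ (k : Fin 3) (b : ℝ), b ∈ Set.Ioo (-1 : ℝ) 1 → ∀ α : Fin 4,
        Pmom (actT (boost k b) T) α = ∑ β : Fin 4, boost k b α β * Pmom T β)
      ↔ ∀ (μ : Fin 4) (m : Fin 3), ∫ y : Fin 3 → ℝ, T (emb y) μ m.succ = 0 := by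
  have hT : Differentiable ℝ T := hsmooth.differentiable (by simp)
  have hP k b (hb : b ∈ Set.Ioo (-1 : ℝ) 1) := Pmom_actT_boost (k := k) hT hstat hInt hb
  constructor
  · intro hcov μ m
    have hb : (1 / 2 : ℝ) ∈ Set.Ioo (-1 : ℝ) 1 := by norm_num
    have hfix : Pmom T + (1 / 2 : ℝ) • (fun γ => ∫ y, T (emb y) γ m.succ) = Pmom T :=
      boost_mulVec_injective hb ((hP m _ hb).symm.trans (funext (hcov m _ hb)))
    simpa using congrFun hfix μ
  · intro hvanish k b hb α
    simp [hP k b hb, hvanish, Matrix.mulVec, dotProduct]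

/-- For a smooth, symmetric, stationary energy-momentum tensor on Minkowski
space whose components (and the components of all its boosted versions) are integrable over
`Σ`, the four-momentum transforms as a four-vector under all pure boosts if and only if the
nine spatial integrals `∫_Σ T^{μm} d³x` vanish. -/
theorem laue_boost_covariance_iff
    (T : (Fin 4 → ℝ) → Fin 4 → Fin 4 → ℝ)
    (hsmooth : ContDiff ℝ (⊤ : ℕ∞) T)
    (hsym : ∀ x α β, T x α β = T x β α)
    (hstat : ∀ x α β, fderiv ℝ (fun z => T z α β) x (Pi.single 0 1) = 0)
    (hInt : ∀ α β, Integrable fun y : Fin 3 → ℝ => T (emb y) α β)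
    (hIntBoost : ∀ (k : Fin 3) (b : ℝ), b ∈ Set.Ioo (-1 : ℝ) 1 → ∀ α β,
      Integrable fun y : Fin 3 → ℝ => actT (boost k b) T (emb y) α β) :
    (∀ (k : Fin 3) (b : ℝ), b ∈ Set.Ioo (-1 : ℝ) 1 → ∀ α : Fin 4,
        Pmom (actT (boost k b) T) α = ∑ β : Fin 4, boost k b α β * Pmom T β)
      ↔ ∀ (μ : Fin 4) (m : Fin 3), ∫ y : Fin 3 → ℝ, T (emb y) μ m.succ = 0 :=
  laue_boost_covariance_iff_general T hsmooth hstat hInt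

end
end

section
/- Let V be an oriented n-dimensional real vector space with nondegenerate symmetric bilinear form g. For every vector v ∈ V and every p-form α ∈ Λ^pV*: i_v(★α) = ★(α ∧ v♭). -/
noncomputable section

/-- The wedge product of a raw `p`-linear candidate `α` and a raw `q`-linear candidate `β`,
with the convention `(α∧β)(v₁,…,v_{p+q}) = (1/(p!q!)) Σ_σ sign(σ) α(v_{σ(1)},…) β(…)`. -/
def wedgeRaw {V : Type*} [AddCommGroup V] [Module ℝ V] {p q : ℕ}
    (α : (Fin p → V) → ℝ) (β : (Fin q → V) → ℝ) : (Fin (p + q) → V) → ℝ :=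
  fun w => ((p.factorial * q.factorial : ℕ) : ℝ)⁻¹ *
    ∑ σ : Equiv.Perm (Fin (p + q)), ((Equiv.Perm.sign σ : ℤ) : ℝ) *
      α (fun i => w (σ (Fin.castAdd q i))) * β (fun j => w (σ (Fin.natAdd p j)))

/-- The `1/q!`-normalised inner product of two raw `q`-linear candidates induced by an
orthonormal basis `e` with signature signs `s` (`g(e i, e j) = s i δ_{ij}`, `s i = ±1`):
`⟨α,β⟩_norm = (1/q!) α_{a₁…a_q} β^{a₁…a_q}`. -/
def innerNormRaw {V : Type*} [AddCommGroup V] [Module ℝ V] {n q : ℕ}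
    (e : Module.Basis (Fin n) ℝ V) (s : Fin n → ℝ)
    (α β : (Fin q → V) → ℝ) : ℝ :=
  ((q.factorial : ℕ) : ℝ)⁻¹ *
    ∑ f : Fin q → Fin n, (∏ i, s (f i)) * α (fun i => e (f i)) * β (fun i => e (f i))

/-!
Both sides are alternating in the remaining `r` arguments, so it suffices to evaluate them on
distinct basis vectors `e_c`; let `a` enumerate the `p + 1` complementary indices. Pairing the
defining identity of `★(α ∧ v♭)` with the dual-basis form `e^a` gives
`τ(e_c) = (∏ᵢ s_{a i}) (α ∧ v♭)(e_a) ε(e_a, e_c)`, and pairing that of `★α` with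
`e^{aσ(0)} ∧ ⋯ ∧ e^{aσ(p-1)}` gives
`★α(e_{aσ(p)}, e_c) = (∏_{i<p} s_{aσ(i)}) α(e_{aσ(0)}, …, e_{aσ(p-1)}) sign σ ε(e_a, e_c)`.
Expanding `v = ∑ s_i g(v, e_i) e_i` on the left and `α ∧ v♭` as a sum over permutations `σ` of
`Fin (p + 1)` on the right, both sides become the same sum over `σ`.
-/

open Equiv Function

namespace HodgeStar

variable {V : Type*} [AddCommGroup V] [Module ℝ V]

lemma sign_mul_sign_self {ι : Type*} [DecidableEq ι] [Fintype ι] (σ : Perm ι) :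
    ((Perm.sign σ : ℤ) : ℝ) * ((Perm.sign σ : ℤ) : ℝ) = 1 := by
  rw [← Int.cast_mul, Int.units_coe_mul_self, Int.cast_one]

lemma _root_.AlternatingMap.map_perm_eq_sign_mul {ι : Type*} [DecidableEq ι] [Fintype ι]
    (f : AlternatingMap ℝ V ℝ ι) (u : ι → V) (σ : Perm ι) :
    f (u ∘ σ) = ((Perm.sign σ : ℤ) : ℝ) * f u := by
  rw [f.map_perm, Units.smul_def, zsmul_eq_mul]

lemma _root_.AlternatingMap.map_comp_append_perm {α : Type*} {n k l : ℕ}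
    (f : AlternatingMap ℝ V ℝ (Fin n)) (φ : α → V) (h : n = k + l) (x : Fin k → α)
    (y : Fin l → α) (σ : Perm (Fin k)) :
    f (φ ∘ Fin.append (x ∘ σ) y ∘ Fin.cast h)
      = ((Perm.sign σ : ℤ) : ℝ) * f (φ ∘ Fin.append x y ∘ Fin.cast h) := by
  set P : Perm (Fin n) :=
    (finCongr h).symm.permCongr (finSumFinEquiv.permCongr (σ.sumCongr 1))
  have hP : φ ∘ Fin.append (x ∘ σ) y ∘ Fin.cast h = (φ ∘ Fin.append x y ∘ Fin.cast h) ∘ P := by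
    refine funext fun i => ?_
    obtain ⟨j, rfl⟩ := (finCongr h).symm.surjective i
    induction j using Fin.addCases <;> simp [P, permCongr_apply]
  rw [hP, f.map_perm_eq_sign_mul]
  simp [P, Perm.sign_permCongr, Perm.sign_sumCongr]

lemma _root_.AlternatingMap.map_cons_eq_sum_repr {ι : Type*} [Fintype ι] {k r : ℕ}
    (e : Module.Basis ι ℝ V) (f : AlternatingMap ℝ V ℝ (Fin (r + 1))) (v : V)
    {a : Fin k → ι} {c : Fin r → ι} (ha : Injective a)
    (hcover : ∀ x, x ∉ Set.range a → x ∈ Set.range c) :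
    f (Fin.cons v (e ∘ c)) = ∑ j, e.repr v (a j) * f (Fin.cons (e (a j)) (e ∘ c)) := by
  have hexpand : f (Fin.cons v (e ∘ c)) = ∑ i, e.repr v i * f (Fin.cons (e i) (e ∘ c)) := by
    calc f (Fin.cons v (e ∘ c))
        = f (update (Fin.cons v (e ∘ c)) 0 (∑ i, e.repr v i • e i)) := by
          rw [e.sum_repr, Fin.update_cons_zero]
      _ = _ := by
          rw [f.map_update_sum]
          refine Finset.sum_congr rfl fun i _ => ?_
          rw [f.map_update_smul, Fin.update_cons_zero, smul_eq_mul]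
  refine hexpand.trans (Fintype.sum_of_injective a ha _ _ (fun x hx => ?_) fun _ => rfl).symm
  obtain ⟨j, rfl⟩ := hcover x hx
  rw [f.map_eq_zero_of_eq _ (i := 0) (j := j.succ) rfl (Fin.succ_ne_zero j).symm, mul_zero]

lemma _root_.Equiv.Perm.exists_permCongr_sumCongr_eq {k l : ℕ} {σ : Perm (Fin (k + l))}
    (h : ∀ i, ∃ i', σ (Fin.castAdd l i) = Fin.castAdd l i') :
    ∃ (ρ : Perm (Fin k)) (θ : Perm (Fin l)), finSumFinEquiv.permCongr (ρ.sumCongr θ) = σ := by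
  have hmaps : Set.MapsTo (finSumFinEquiv.symm.permCongr σ) (Set.range Sum.inl)
      (Set.range Sum.inl) := by
    rintro _ ⟨i, rfl⟩
    obtain ⟨i', hi'⟩ := h i
    exact ⟨i', by simp [permCongr_apply, hi']⟩
  obtain ⟨⟨ρ, θ⟩, hρθ⟩ := Perm.mem_sumCongrHom_range_of_perm_mapsTo_inl hmaps
  refine ⟨ρ, θ, ?_⟩
  change finSumFinEquiv.permCongr (Perm.sumCongrHom _ _ (ρ, θ)) = σ
  rw [hρθ]
  exact Equiv.ext fun x => by simp [permCongr_apply]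

lemma wedgeRaw_comp_perm {k l : ℕ} (α : (Fin k → V) → ℝ) (β : (Fin l → V) → ℝ)
    (u : Fin (k + l) → V) (ρ : Perm (Fin (k + l))) :
    wedgeRaw α β (u ∘ ρ) = ((Perm.sign ρ : ℤ) : ℝ) * wedgeRaw α β u := by
  unfold wedgeRaw
  rw [mul_left_comm ((Perm.sign ρ : ℤ) : ℝ)]
  congr 1
  rw [Finset.mul_sum]
  refine Fintype.sum_equiv (Equiv.mulLeft ρ) _ _ fun σ => ?_
  simp only [coe_mulLeft, Perm.coe_mul, comp_apply, Perm.sign_mul, Units.val_mul, Int.cast_mul]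
  linear_combination (-((Perm.sign σ : ℤ) : ℝ) * α (fun i => u (ρ (σ (Fin.castAdd l i))))
    * β (fun j => u (ρ (σ (Fin.natAdd k j))))) * sign_mul_sign_self ρ

lemma wedgeRaw_apply_of_one_form {p : ℕ} (α : (Fin p → V) → ℝ) (φ : V → ℝ)
    (u : Fin (p + 1) → V) :
    wedgeRaw α (fun z : Fin 1 → V => φ (z 0)) u = (p.factorial : ℝ)⁻¹ *
      ∑ σ : Perm (Fin (p + 1)), ((Perm.sign σ : ℤ) : ℝ) * α (u ∘ σ ∘ Fin.castSucc)
        * φ (u (σ (Fin.last p))) := by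
  simp only [wedgeRaw, Nat.factorial_one, Nat.mul_one]
  rfl

lemma sum_perm_apply_eq {n : ℕ} (F : Fin (n + 1) → ℝ) (x : Fin (n + 1)) :
    ∑ σ : Perm (Fin (n + 1)), F (σ x) = n.factorial * ∑ y, F y := by
  have hx (y) : ∑ σ : Perm (Fin (n + 1)), F (σ y) = ∑ σ : Perm (Fin (n + 1)), F (σ x) :=
    Fintype.sum_equiv (Equiv.mulRight (swap x y)) _ _ fun σ => by simp
  have hcount : ((n + 1 : ℕ) : ℝ) * ∑ σ : Perm (Fin (n + 1)), F (σ x)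
      = (n + 1 : ℕ) * (n.factorial * ∑ y, F y) := by
    calc ((n + 1 : ℕ) : ℝ) * ∑ σ : Perm (Fin (n + 1)), F (σ x)
        = ∑ y : Fin (n + 1), ∑ σ : Perm (Fin (n + 1)), F (σ y) := by simp [hx]
      _ = ∑ σ : Perm (Fin (n + 1)), ∑ y, F y := by
        rw [Finset.sum_comm]
        exact Finset.sum_congr rfl fun σ _ => Equiv.sum_comp σ F
      _ = _ := by simp [Fintype.card_perm, Nat.factorial_succ, mul_assoc]
  exact mul_left_cancel₀ (by positivity) hcount

lemma exists_injective_compl_range {ι : Type*} [Fintype ι] {k r : ℕ}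
    (hι : Fintype.card ι = k + r) {c : Fin r → ι} (hc : Injective c) :
    ∃ a : Fin k → ι, Injective a ∧ (∀ i j, a i ≠ c j) ∧
      ∀ x, x ∉ Set.range a → x ∈ Set.range c := by
  classical
  have hcard : Fintype.card {x // x ∉ Set.range c} = k := by
    rw [Fintype.card_subtype_compl, Set.card_range_of_injective hc, hι, Fintype.card_fin]
    omega
  set E := (Fintype.equivFinOfCardEq hcard).symm
  refine ⟨fun i => E i, Subtype.val_injective.comp E.injective,
    fun i j h => (E i).2 ⟨j, h.symm⟩, fun x hx => ?_⟩
  by_contra hxc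
  exact hx ⟨E.symm ⟨x, hxc⟩, by simp⟩

lemma repr_apply_eq_mul_apply {ι : Type*} [Fintype ι] [DecidableEq ι]
    (g : V →ₗ[ℝ] V →ₗ[ℝ] ℝ) (e : Module.Basis ι ℝ V) (s : ι → ℝ)
    (hs : ∀ i, s i = 1 ∨ s i = -1)
    (horth : ∀ i j, g (e i) (e j) = if i = j then s i else 0) (v : V) (i : ι) :
    e.repr v i = s i * g v (e i) := by
  have hg : g v (e i) = e.repr v i * s i := by
    conv_lhs => rw [← e.sum_repr v]
    simp only [map_sum, map_smul, LinearMap.sum_apply, LinearMap.smul_apply, horth, smul_eq_mul,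
      mul_ite, mul_zero, Finset.sum_ite_eq', Finset.mem_univ, if_true]
  rcases hs i with h | h <;> rw [hg, h] <;> ring

/-- The dual-basis `k`-form `e^{a 0} ∧ ⋯ ∧ e^{a (k-1)}`. -/
def basisWedge {ι : Type*} {k : ℕ} (e : Module.Basis ι ℝ V) (a : Fin k → ι) :
    AlternatingMap ℝ V ℝ (Fin k) :=
  (Pi.basisFun ℝ (Fin k)).det.compLinearMap (LinearMap.pi fun i => e.coord (a i))

section basisWedge

variable {ι : Type*} {k : ℕ} (e : Module.Basis ι ℝ V) {a : Fin k → ι}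

lemma basisWedge_apply_comp_perm (ha : Injective a) (ρ : Perm (Fin k)) :
    basisWedge e a (e ∘ a ∘ ρ) = ((Perm.sign ρ : ℤ) : ℝ) := by
  have hself : basisWedge e a (e ∘ a) = 1 := by
    have : (fun j i => e.coord (a i) (e (a j))) = ⇑(Pi.basisFun ℝ (Fin k)) := by
      ext j i
      simp [Pi.single_apply, Finsupp.single_apply_left ha, Finsupp.single_apply, eq_comm]
    rw [basisWedge, AlternatingMap.compLinearMap_apply]
    exact this ▸ (Pi.basisFun ℝ (Fin k)).det_self
  rw [← comp_assoc, AlternatingMap.map_perm_eq_sign_mul, hself, mul_one]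

lemma basisWedge_apply_eq_zero {f : Fin k → ι} (hf : ∀ ρ : Perm (Fin k), f ≠ a ∘ ρ) :
    basisWedge e a (e ∘ f) = 0 := by
  by_cases hcover : ∀ j, ∃ i, a i = f j
  · choose t ht using hcover
    have hfa : f = a ∘ t := funext fun j => (ht j).symm
    refine AlternatingMap.map_eq_zero_of_not_injective _ _ fun hinj => ?_
    have ht_inj : Injective t := by
      rw [hfa, ← comp_assoc] at hinj
      exact hinj.of_comp
    exact hf (Equiv.ofBijective t (Finite.injective_iff_bijective.mp ht_inj)) hfa
  · push Not at hcover
    obtain ⟨j, hj⟩ := hcover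
    rw [basisWedge, AlternatingMap.compLinearMap_apply]
    refine AlternatingMap.map_coord_zero _ j ?_
    ext i
    simp [hj i]

lemma basisWedge_apply_append_comp_perm_eq_zero {l : ℕ} {b : Fin l → ι}
    (hab : ∀ i j, a i ≠ b j) {σ : Perm (Fin (k + l))}
    (hσ : ∀ ρ θ, finSumFinEquiv.permCongr (Perm.sumCongr ρ θ) ≠ σ) :
    basisWedge e a (e ∘ Fin.append a b ∘ σ ∘ Fin.castAdd l) = 0 := by
  refine basisWedge_apply_eq_zero e fun ρ hρ => ?_
  suffices h : ∀ i, ∃ i', σ (Fin.castAdd l i) = Fin.castAdd l i' by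
    obtain ⟨ρ', θ', hσ'⟩ := Perm.exists_permCongr_sumCongr_eq h
    exact hσ ρ' θ' hσ'
  intro i
  rcases h : finSumFinEquiv.symm (σ (Fin.castAdd l i)) with i' | j
  · rw [Equiv.symm_apply_eq, finSumFinEquiv_apply_left] at h
    exact ⟨i', h⟩
  · rw [Equiv.symm_apply_eq, finSumFinEquiv_apply_right] at h
    have hi := congrFun hρ i
    simp only [comp_apply, h, Fin.append_right] at hi
    exact absurd hi.symm (hab _ _)

end basisWedge

lemma innerNormRaw_basisWedge {n k : ℕ} (e : Module.Basis (Fin n) ℝ V) (s : Fin n → ℝ)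
    {a : Fin k → Fin n} (ha : Injective a) {β : (Fin k → V) → ℝ}
    (hβ : ∀ (u : Fin k → V) (θ : Perm (Fin k)), β (u ∘ θ) = ((Perm.sign θ : ℤ) : ℝ) * β u) :
    innerNormRaw e s (basisWedge e a) β = (∏ i, s (a i)) * β (e ∘ a) := by
  have hsum : ∑ f : Fin k → Fin n, (∏ i, s (f i)) * basisWedge e a (e ∘ f) * β (e ∘ f)
      = ∑ _ρ : Perm (Fin k), (∏ i, s (a i)) * β (e ∘ a) := by
    refine (Fintype.sum_of_injective (fun ρ : Perm (Fin k) => a ∘ ρ)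
      (fun ρ ρ' h => Equiv.ext fun i => ha (congrFun h i)) _ _ ?_ fun ρ => ?_).symm
    · intro f hf
      rw [basisWedge_apply_eq_zero e fun ρ h => hf ⟨ρ, h.symm⟩, mul_zero, zero_mul]
    · rw [basisWedge_apply_comp_perm e ha, ← comp_assoc, hβ]
      simp only [comp_apply, Equiv.prod_comp ρ fun i => s (a i)]
      linear_combination (-(∏ i, s (a i)) * β (e ∘ a)) * sign_mul_sign_self ρ
  unfold innerNormRaw
  refine (congrArg _ hsum).trans ?_
  simp only [Finset.sum_const, Finset.card_univ, Fintype.card_perm, Fintype.card_fin, nsmul_eq_mul]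
  exact inv_mul_cancel_left₀ (by positivity) _

lemma wedgeRaw_basisWedge_append {ι : Type*} {k l : ℕ} (e : Module.Basis ι ℝ V)
    {a : Fin k → ι} {b : Fin l → ι} (ha : Injective a) (hab : ∀ i j, a i ≠ b j)
    {μ : (Fin l → V) → ℝ}
    (hμ : ∀ (u : Fin l → V) (θ : Perm (Fin l)), μ (u ∘ θ) = ((Perm.sign θ : ℤ) : ℝ) * μ u) :
    wedgeRaw (basisWedge e a) μ (e ∘ Fin.append a b) = μ (e ∘ b) := by
  set Φ : Perm (Fin k) × Perm (Fin l) → Perm (Fin (k + l)) :=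
    fun ρθ => finSumFinEquiv.permCongr (ρθ.1.sumCongr ρθ.2)
  have hΦ_inj : Injective Φ :=
    (finSumFinEquiv.permCongr.injective).comp Perm.sumCongrHom_injective
  have hΦ_castAdd (ρθ) (i : Fin k) : Φ ρθ (Fin.castAdd l i) = Fin.castAdd l (ρθ.1 i) := by
    simp [Φ, Equiv.permCongr_apply]
  have hΦ_natAdd (ρθ) (j : Fin l) : Φ ρθ (Fin.natAdd k j) = Fin.natAdd k (ρθ.2 j) := by
    simp [Φ, Equiv.permCongr_apply]
  have hsum : ∑ σ : Perm (Fin (k + l)), ((Perm.sign σ : ℤ) : ℝ)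
        * basisWedge e a (e ∘ Fin.append a b ∘ σ ∘ Fin.castAdd l)
        * μ (e ∘ Fin.append a b ∘ σ ∘ Fin.natAdd k)
      = ∑ _ρθ : Perm (Fin k) × Perm (Fin l), μ (e ∘ b) := by
    refine (Fintype.sum_of_injective Φ hΦ_inj _ _ ?_ fun ρθ => ?_).symm
    · intro σ hσ
      rw [basisWedge_apply_append_comp_perm_eq_zero e hab fun ρ θ h => hσ ⟨(ρ, θ), h⟩,
        mul_zero, zero_mul]
    · obtain ⟨ρ, θ⟩ := ρθ
      have hsign : ((Perm.sign (Φ (ρ, θ)) : ℤ) : ℝ)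
          = ((Perm.sign ρ : ℤ) : ℝ) * ((Perm.sign θ : ℤ) : ℝ) := by
        simp [Φ, Perm.sign_permCongr, Perm.sign_sumCongr]
      have hleft : Fin.append a b ∘ Φ (ρ, θ) ∘ Fin.castAdd l = a ∘ ρ :=
        funext fun i => by simp [hΦ_castAdd]
      have hright : Fin.append a b ∘ Φ (ρ, θ) ∘ Fin.natAdd k = b ∘ θ :=
        funext fun j => by simp [hΦ_natAdd]
      rw [hleft, hright, basisWedge_apply_comp_perm e ha, ← comp_assoc, hμ, hsign]
      linear_combination (-((Perm.sign θ : ℤ) : ℝ) * ((Perm.sign θ : ℤ) : ℝ) * μ (e ∘ b))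
        * sign_mul_sign_self ρ - μ (e ∘ b) * sign_mul_sign_self θ
  unfold wedgeRaw
  refine (congrArg _ hsum).trans ?_
  simp only [Finset.sum_const, Finset.card_univ, Fintype.card_prod, Fintype.card_perm,
    Fintype.card_fin, nsmul_eq_mul]
  exact inv_mul_cancel_left₀ (by positivity) _

/-- `μ = ★β` with respect to `ε`: `γ ∧ μ = ⟨γ, β⟩_norm ε` for every `k`-form `γ`. -/
def IsHodgeDual {n k l : ℕ} (e : Module.Basis (Fin n) ℝ V) (s : Fin n → ℝ)
    (ε : AlternatingMap ℝ V ℝ (Fin n)) (h : n = k + l) (β : (Fin k → V) → ℝ)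
    (μ : AlternatingMap ℝ V ℝ (Fin l)) : Prop :=
  ∀ (γ : AlternatingMap ℝ V ℝ (Fin k)) (w : Fin n → V),
    wedgeRaw γ μ (fun i => w (Fin.cast h.symm i)) = innerNormRaw e s γ β * ε w

section IsHodgeDual

variable {n : ℕ} {e : Module.Basis (Fin n) ℝ V} {s : Fin n → ℝ} {ε : AlternatingMap ℝ V ℝ (Fin n)}

lemma IsHodgeDual.apply_basis {k l : ℕ} {h : n = k + l} {β : (Fin k → V) → ℝ}
    {μ : AlternatingMap ℝ V ℝ (Fin l)} (hμ : IsHodgeDual e s ε h β μ)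
    {a : Fin k → Fin n} {b : Fin l → Fin n} (ha : Injective a) (hab : ∀ i j, a i ≠ b j)
    (hβ : ∀ (u : Fin k → V) (θ : Perm (Fin k)), β (u ∘ θ) = ((Perm.sign θ : ℤ) : ℝ) * β u) :
    μ (e ∘ b) = (∏ i, s (a i)) * β (e ∘ a) * ε (e ∘ Fin.append a b ∘ Fin.cast h) := by
  have hpair := hμ (basisWedge e a) (e ∘ Fin.append a b ∘ Fin.cast h)
  have hw : (fun i => (e ∘ Fin.append a b ∘ Fin.cast h) (Fin.cast h.symm i))
      = e ∘ Fin.append a b := funext fun i => by simp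
  rwa [hw, wedgeRaw_basisWedge_append e ha hab μ.map_perm_eq_sign_mul,
    innerNormRaw_basisWedge e s ha hβ] at hpair

lemma IsHodgeDual.apply_cons_basis {p r : ℕ} {h : n = p + (r + 1)} {β : (Fin p → V) → ℝ}
    {μ : AlternatingMap ℝ V ℝ (Fin (r + 1))} (hμ : IsHodgeDual e s ε h β μ) (h' : n = p + 1 + r)
    {a : Fin (p + 1) → Fin n} {c : Fin r → Fin n} (ha : Injective a) (hac : ∀ i j, a i ≠ c j)
    (hβ : ∀ (u : Fin p → V) (θ : Perm (Fin p)), β (u ∘ θ) = ((Perm.sign θ : ℤ) : ℝ) * β u) :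
    μ (Fin.cons (e (a (Fin.last p))) (e ∘ c))
      = (∏ i, s (a (Fin.castSucc i))) * β (e ∘ a ∘ Fin.castSucc)
        * ε (e ∘ Fin.append a c ∘ Fin.cast h') := by
  have hac' (i j) :
      (a ∘ Fin.castSucc) i ≠ (Fin.cons (a (Fin.last p)) c : Fin (r + 1) → Fin n) j := by
    cases j using Fin.cases with
    | zero => exact ha.ne (Fin.castSucc_lt_last i).ne
    | succ j => exact hac _ j
  have harr : e ∘ Fin.append (a ∘ Fin.castSucc) (Fin.cons (a (Fin.last p)) c) ∘ Fin.cast h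
      = e ∘ Fin.append a c ∘ Fin.cast h' := by
    have hsnoc : Fin.snoc (a ∘ Fin.castSucc) (a (Fin.last p)) = a := Fin.snoc_init_self a
    rw [Fin.append_right_cons, hsnoc]
    exact funext fun i => by simp
  rw [← Fin.comp_cons, hμ.apply_basis (ha.comp (Fin.castSucc_injective p)) hac' hβ, harr]
  rfl

end IsHodgeDual

end HodgeStar

open HodgeStar

/-- In an oriented `n`-dimensional (`n = p + r + 1`) real vector space with
nondegenerate symmetric bilinear form `g` (orthonormal basis `e`, signs `s`, volume form
`ε = det_e`), for every vector `v` and every `p`-form `α`: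
`i_v(★α) = ★(α ∧ v♭)`.  Here `★` on `p`-forms is the map `star1` with defining property
`γ ∧ star1 β = ⟨γ,β⟩_norm ε`, and `★(α∧v♭)` is the `r`-form `τ` with defining property
`γ ∧ τ = ⟨γ, α∧v♭⟩_norm ε` for all `(p+1)`-forms `γ`. -/
theorem insertion_hodge_eq_hodge_wedge_flat
    {V : Type*} [AddCommGroup V] [Module ℝ V] {p r : ℕ}
    (g : V →ₗ[ℝ] V →ₗ[ℝ] ℝ)
    (e : Module.Basis (Fin (p + r + 1)) ℝ V)
    (s : Fin (p + r + 1) → ℝ) (hs : ∀ i, s i = 1 ∨ s i = -1)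
    (horth : ∀ i j, g (e i) (e j) = if i = j then s i else 0)
    (ε : AlternatingMap ℝ V ℝ (Fin (p + r + 1)))
    (star1 : AlternatingMap ℝ V ℝ (Fin p) → AlternatingMap ℝ V ℝ (Fin (r + 1)))
    (hstar1 : ∀ (γ β : AlternatingMap ℝ V ℝ (Fin p)) (w : Fin (p + r + 1) → V),
      wedgeRaw ⇑γ ⇑(star1 β) w = innerNormRaw e s ⇑γ ⇑β * ε w)
    (v : V) (α : AlternatingMap ℝ V ℝ (Fin p))
    (τ : AlternatingMap ℝ V ℝ (Fin r))
    (hτ : ∀ (γ : AlternatingMap ℝ V ℝ (Fin (p + 1))) (w : Fin (p + r + 1) → V),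
      wedgeRaw ⇑γ ⇑τ (fun i => w (Fin.cast (by omega) i))
        = innerNormRaw e s ⇑γ
            (wedgeRaw ⇑α (fun z : Fin 1 → V => g v (z 0))) * ε w) :
    ∀ w : Fin r → V, star1 α (Fin.cons v w) = τ w := by
  suffices h : (star1 α).curryLeft v = τ from fun w => congrArg (· w) h
  refine e.ext_alternating fun c hc => ?_
  obtain ⟨a, ha, hac, hcover⟩ :=
    exists_injective_compl_range (k := p + 1) (by rw [Fintype.card_fin]; omega) hc
  have hcast : p + r + 1 = p + 1 + r := by omega
  set E := ε (e ∘ Fin.append a c ∘ Fin.cast hcast)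
  have hτc := IsHodgeDual.apply_basis (h := hcast) hτ ha hac (wedgeRaw_comp_perm _ _)
  have hstar : IsHodgeDual (k := p) (l := r + 1) e s ε rfl α (star1 α) :=
    fun γ w => hstar1 γ α w
  have hterm (σ : Perm (Fin (p + 1))) :
      e.repr v (a (σ (Fin.last p))) * star1 α (Fin.cons (e (a (σ (Fin.last p)))) (e ∘ c))
        = (∏ i, s (a i)) * (((Perm.sign σ : ℤ) : ℝ) * α (e ∘ a ∘ σ ∘ Fin.castSucc)
            * g v (e (a (σ (Fin.last p))))) * E := by
    have hσ : star1 α (Fin.cons (e (a (σ (Fin.last p)))) (e ∘ c)) = _ :=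
      hstar.apply_cons_basis hcast (ha.comp σ.injective) (fun i j => hac _ j)
        α.map_perm_eq_sign_mul
    rw [hσ, ε.map_comp_append_perm, repr_apply_eq_mul_apply g e s hs horth,
      ← Equiv.prod_comp σ (fun i => s (a i)), Fin.prod_univ_castSucc]
    simp only [comp_apply, comp_assoc]
    ring
  change star1 α (Fin.cons v (e ∘ c)) = τ (e ∘ c)
  rw [(star1 α).map_cons_eq_sum_repr e v ha hcover, hτc, wedgeRaw_apply_of_one_form,
    ← inv_mul_cancel_left₀ (by positivity : (p.factorial : ℝ) ≠ 0) (∑ j, _),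
    ← sum_perm_apply_eq _ (Fin.last p)]
  simp only [hterm, Finset.mul_sum, Finset.sum_mul, comp_apply, comp_assoc]
  exact Finset.sum_congr rfl fun _ _ => by ring
end
end

section
/- Under the identification of the Lie algebra of the Poincaré group V ⋊ O(V,η) and its dual with V ⊕ Λ²V via the pairing ⟨(x,X),(y,Y)⟩ = η(x,y) + ½(η⊗η)(X,Y), the coadjoint representation is given by: Ad*_{(a,A)}(P,M) = (AP, (A⊗A)M − a ∧ (AP)) for all (a,A) ∈ V ⋊ O(V,η) and all (P,M) ∈ V ⊕ Λ²V. -/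
noncomputable section

variable {V : Type*} [AddCommGroup V] [Module ℝ V]

/-- The η-antisymmetric endomorphism corresponding to `u ∧ v ∈ Λ²V`:
`(u∧v)(w) := u η(v,w) − v η(u,w)`. -/
def wedgeEndo (η : V →ₗ[ℝ] V →ₗ[ℝ] ℝ) (u v : V) : V →ₗ[ℝ] V :=
  (η v).smulRight u - (η u).smulRight v

/-- The adjoint action of the Poincaré-group element `(a, A)` on a Lie-algebra element
`(P, M) ∈ V ⊕ Λ²V` (with `M` realized as an η-antisymmetric endomorphism, and `(A⊗A)M`
realized as `A ∘ M ∘ A⁻¹`):  `Ad_{(a,A)}(P,M) = (AP − [(A⊗A)M]a , (A⊗A)M)`. -/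
def adPoin (a : V) (A : V ≃ₗ[ℝ] V) (p : V × (V →ₗ[ℝ] V)) : V × (V →ₗ[ℝ] V) :=
  (A p.1 - (A.toLinearMap ∘ₗ p.2 ∘ₗ A.symm.toLinearMap) a,
   A.toLinearMap ∘ₗ p.2 ∘ₗ A.symm.toLinearMap)

/-- The pairing `⟨(x,X),(y,Y)⟩ = η(x,y) + ½(η⊗η)(X,Y)` identifying `Lie*(Poin)` with
`V ⊕ Λ²V`; in terms of the endomorphism realization, `½(η⊗η)(X,Y) = −½ tr(X∘Y)`. -/
def poinPairing [Module.Finite ℝ V] (η : V →ₗ[ℝ] V →ₗ[ℝ] ℝ)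
    (p q : V × (V →ₗ[ℝ] V)) : ℝ :=
  η p.1 q.1 - (1 / 2) * LinearMap.trace ℝ V (p.2 ∘ₗ q.2)

/-- Trace of the rank-one endomorphism `v ↦ f v • u` is `f u`. -/
lemma trace_smulRight' [FiniteDimensional ℝ V] (f : V →ₗ[ℝ] ℝ) (u : V) :
    LinearMap.trace ℝ V (f.smulRight u) = f u := by
  have : f.smulRight u = dualTensorHom ℝ V V (f ⊗ₜ u) := by
    ext v; simp
  rw [this, LinearMap.trace_eq_contract_apply]
  simp

/-- **coadjoint representation of the Poincaré group.**
Under the identification of `Lie(Poin)` and its dual with `V ⊕ Λ²V` via the pairing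
`⟨(x,X),(y,Y)⟩ = η(x,y) + ½(η⊗η)(X,Y)`, the coadjoint representation
`Ad*_{(a,A)} = (Ad_{(a,A)⁻¹})^⊤` is given by
`Ad*_{(a,A)}(P,M) = (AP, (A⊗A)M − a ∧ (AP))`:
for every η-antisymmetric `(y,Y)`,
`⟨(AP, (A⊗A)M − a∧(AP)), (y,Y)⟩ = ⟨(P,M), Ad_{(−A⁻¹a, A⁻¹)}(y,Y)⟩`. -/
theorem poincare_coadjoint_representation
    [FiniteDimensional ℝ V]
    (η : V →ₗ[ℝ] V →ₗ[ℝ] ℝ)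
    (hsym : ∀ v w, η v w = η w v)
    (hnd : ∀ v, (∀ w, η v w = 0) → v = 0)
    (a : V) (A : V ≃ₗ[ℝ] V)
    (hA : ∀ v w, η (A v) (A w) = η v w)
    (P : V) (M : V →ₗ[ℝ] V)
    (hManti : ∀ v w, η (M v) w = - η v (M w)) :
    ∀ (y : V) (Y : V →ₗ[ℝ] V), (∀ v w, η (Y v) w = - η v (Y w)) →
      poinPairing η
        (A P, (A.toLinearMap ∘ₗ M ∘ₗ A.symm.toLinearMap) - wedgeEndo η a (A P))
        (y, Y)
      = poinPairing η (P, M) (adPoin (-(A.symm a)) A.symm (y, Y)) := by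
  intro y Y hY
  -- invariance of η under A, in the form needed for A.symm
  have hA' : ∀ v w, η v (A.symm w) = η (A v) w := by
    intro v w
    conv_rhs => rw [show w = A (A.symm w) from (A.apply_symm_apply w).symm]
    rw [hA]
  -- composing a rank-one map with g
  have hsr : ∀ (f : V →ₗ[ℝ] ℝ) (u : V) (g : V →ₗ[ℝ] V),
      (f.smulRight u) ∘ₗ g = (f ∘ₗ g).smulRight u := by
    intro f u g; ext v; simp
  -- trace of (a ∧ AP) ∘ Y
  have h1 : LinearMap.trace ℝ V ((wedgeEndo η a (A P)) ∘ₗ Y) = 2 * η (A P) (Y a) := by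
    rw [wedgeEndo, LinearMap.sub_comp, map_sub, hsr, hsr,
      trace_smulRight', trace_smulRight']
    simp only [LinearMap.comp_apply]
    have h2 : η a (Y (A P)) = - η (A P) (Y a) := by
      have h3 := hY a (A P)
      rw [hsym (Y a) (A P)] at h3
      linarith
    rw [h2]; ring
  -- conjugation-invariance of the trace term
  have h3 : LinearMap.trace ℝ V (M ∘ₗ (A.symm.toLinearMap ∘ₗ Y ∘ₗ A.symm.symm.toLinearMap))
      = LinearMap.trace ℝ V ((A.toLinearMap ∘ₗ M ∘ₗ A.symm.toLinearMap) ∘ₗ Y) := by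
    rw [show M ∘ₗ (A.symm.toLinearMap ∘ₗ Y ∘ₗ A.symm.symm.toLinearMap)
        = (M ∘ₗ A.symm.toLinearMap ∘ₗ Y) ∘ₗ A.toLinearMap by ext v; simp,
      LinearMap.trace_comp_comm']
    congr 1
  simp only [poinPairing, adPoin, LinearMap.sub_comp, map_sub]
  rw [h1, h3]
  have e1 : η P (A.symm y) = η (A P) y := hA' P y
  have e2 : η P ((A.symm.toLinearMap ∘ₗ Y ∘ₗ A.symm.symm.toLinearMap) (-(A.symm a)))
      = - η (A P) (Y a) := by
    simp only [LinearMap.comp_apply, LinearEquiv.coe_coe, LinearEquiv.symm_symm,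
      map_neg, LinearEquiv.apply_symm_apply]
    rw [hA']
  rw [e1, e2]
  ring

end
end
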